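/- Let (A, m) be a regular local Noetherian super-commutative super-ring (Ksdim(A) = sdim_K(m/m²)) such that Ā = A₀/A₁² is an integral domain, and let y₁,…,yₛ be a minimal generating set of the A₀-module A₁, where s = dim_K((m/m²)₁). Then for each 0 < t ≤ s, the products y^J with J ⊆ {1,…,s}, |J| = t, form a free Ā-basis of I_A^t/I_A^{t+1}; i.e., the canonical surjection λ_A : Λ_Ā(I_A/I_A²) → gr_{I_A}(A) is an isomorphism. -/

import Mathlib

/-- The product `z₁ ⋯ z_l` of a family of (odd) elements, in order. -/
noncomputable def oddProd {R : Type*} [Ring R] {l : ℕ} (z : Fin l → R) : R :=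
  (List.ofFn z).prod

/-- The monomial `y^J`, product of the `y i`, `i ∈ J`, in increasing order. -/
noncomputable def oddMonomial {R : Type*} [Ring R] {s : ℕ}
    (y : Fin s → R) (J : Finset (Fin s)) : R :=
  ((J.sort (· ≤ ·)).map y).prod

/-- The ideal `A₁²` of `R₀`: the pullback under `R₀ → R` of the ideal generated
by products of two odd elements. -/
def oddSquares {R₀ R : Type*} [CommRing R₀] [Ring R] [Algebra R₀ R]
    (𝒜 : ZMod 2 → Submodule R₀ R) : Ideal R₀ :=
  Ideal.comap (algebraMap R₀ R)
    (Ideal.span {x : R | ∃ a ∈ 𝒜 1, ∃ b ∈ 𝒜 1, x = a * b})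

/-- The power `I_A^t` of the super-ideal `I_A = A·A₁`, as an `R₀`-submodule:
the span of all products of at least `t` odd elements. -/
def IApow {R₀ R : Type*} [CommRing R₀] [Ring R] [Algebra R₀ R]
    (𝒜 : ZMod 2 → Submodule R₀ R) (t : ℕ) : Submodule R₀ R :=
  Submodule.span R₀ {x : R | ∃ k, t ≤ k ∧
    ∃ w : Fin k → R, (∀ i, w i ∈ 𝒜 1) ∧ x = oddProd w}

/-!
Odd elements anticommute and square to zero, so a product of odd elements equals, up to sign,
the monomial `y^J` on the indices it involves, or vanishes if an index repeats. Hence `I_A^t` is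
spanned by the `y^J` with `|J| = t` modulo `I_A^{t+1}`, and `I_A^{s+1} = 0`. Multiplying a
relation `∑ a_J y^J ∈ I_A^{t+1}` by `y^{J₀ᶜ}` kills every term but `± a_{J₀} y₁⋯yₛ`, so `a_{J₀}`
annihilates `y₁⋯yₛ`. This annihilator contains `A₁²`, and odd regularity provides a product of
`s` odd elements, necessarily a multiple of `y₁⋯yₛ`, whose annihilator cuts out a quotient of
full dimension. Since `A₀` is Noetherian local its dimension is finite, and as `A₀/A₁²` is a
domain, any ideal strictly larger than `A₁²` would lower the dimension: the annihilator is `A₁²`.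
-/

theorem Ideal.eq_of_le_of_ringKrullDim_quotient_eq {A : Type*} [CommRing A]
    [FiniteRingKrullDim A] {I N : Ideal A} [IsDomain (A ⧸ I)] (hIN : I ≤ N)
    (hdim : ringKrullDim (A ⧸ N) = ringKrullDim A) : N = I := by
  refine le_antisymm (fun x hxN => ?_) hIN
  by_contra hxI
  have hx : Ideal.Quotient.mk I x ∈ nonZeroDivisors (A ⧸ I) :=
    mem_nonZeroDivisors_of_ne_zero (by rwa [ne_eq, Ideal.Quotient.eq_zero_iff_mem])
  have hlt := ringKrullDim_succ_le_of_surjective (Ideal.Quotient.factor hIN)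
    (Ideal.Quotient.factor_surjective hIN) hx
    (by rwa [Ideal.Quotient.factor_mk, Ideal.Quotient.eq_zero_iff_mem])
  rw [hdim] at hlt
  obtain ⟨n, hn⟩ : ∃ n : ℕ, ringKrullDim A = n := by
    obtain ⟨m, hm⟩ := WithBot.ne_bot_iff_exists.mp (ringKrullDim_ne_bot (R := A))
    have hm_top : m ≠ ⊤ := fun h => ringKrullDim_ne_top (R := A) (by rw [← hm, h]; rfl)
    obtain ⟨n, rfl⟩ := ENat.ne_top_iff_exists.mp hm_top
    exact ⟨n, hm.symm⟩
  have := hlt.trans (ringKrullDim_quotient_le I)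
  rw [hn] at this
  have : n + 1 ≤ n := by exact_mod_cast this
  omega

section OddElements

variable {R₀ R : Type*} [CommRing R₀] [Ring R] [Algebra R₀ R]
  {𝒜 : ZMod 2 → Submodule R₀ R}

theorem odd_anticomm (hsq : ∀ a ∈ 𝒜 1, a * a = 0) {a b : R} (ha : a ∈ 𝒜 1)
    (hb : b ∈ 𝒜 1) : a * b = -(b * a) := by
  have h := hsq (a + b) (add_mem ha hb)
  rw [add_mul, mul_add, mul_add, hsq a ha, hsq b hb, zero_add, add_zero] at h
  exact eq_neg_of_add_eq_zero_left h

theorem List.Perm.prod_eq_units_smul_prod_of_odd (hsq : ∀ a ∈ 𝒜 1, a * a = 0)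
    {L L' : List R} (h : L.Perm L') (hL : ∀ x ∈ L, x ∈ 𝒜 1) :
    ∃ u : ℤˣ, L.prod = u • L'.prod := by
  induction h with
  | nil => exact ⟨1, by simp⟩
  | cons x _ ih =>
    obtain ⟨u, hu⟩ := ih fun z hz => hL z (List.mem_cons_of_mem x hz)
    exact ⟨u, by rw [List.prod_cons, List.prod_cons, hu, mul_smul_comm]⟩
  | swap x x' _ =>
    refine ⟨-1, ?_⟩
    have hx : x ∈ 𝒜 1 := hL x (by simp)
    have hx' : x' ∈ 𝒜 1 := hL x' (by simp)
    simp only [List.prod_cons, ← mul_assoc, odd_anticomm hsq hx' hx, neg_mul, Units.neg_smul,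
      one_smul]
  | trans h₁ _ ih₁ ih₂ =>
    obtain ⟨u, hu⟩ := ih₁ hL
    obtain ⟨v, hv⟩ := ih₂ fun z hz => hL z (h₁.mem_iff.mpr hz)
    exact ⟨u * v, by rw [hu, hv, mul_smul]⟩

theorem List.prod_eq_zero_of_odd_of_not_nodup (hsq : ∀ a ∈ 𝒜 1, a * a = 0) {L : List R}
    (hL : ∀ x ∈ L, x ∈ 𝒜 1) (hdup : ¬ L.Nodup) : L.prod = 0 := by
  obtain ⟨a, ha⟩ : ∃ a, [a, a].Sublist L := by simpa [List.nodup_iff_sublist] using hdup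
  obtain ⟨L', hperm⟩ := ha.exists_perm_append
  obtain ⟨u, hu⟩ := hperm.prod_eq_units_smul_prod_of_odd hsq hL
  have haa : a * a = 0 := hsq a (hL a (ha.subset (by simp)))
  rw [hu, List.prod_append, List.prod_cons, List.prod_singleton, haa, zero_mul, smul_zero]

variable {s : ℕ} {y : Fin s → R}

theorem oddMonomial_singleton (i : Fin s) : oddMonomial y {i} = y i := by
  simp [oddMonomial, Finset.sort_singleton]

theorem oddMonomial_mul_oddMonomial_eq_prod (J J' : Finset (Fin s)) :
    oddMonomial y J * oddMonomial y J' =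
      ((J.sort (· ≤ ·) ++ J'.sort (· ≤ ·)).map y).prod := by
  rw [List.map_append, List.prod_append, oddMonomial, oddMonomial]

theorem oddMonomial_mul_oddMonomial_of_not_disjoint (hsq : ∀ a ∈ 𝒜 1, a * a = 0)
    (hy : ∀ i, y i ∈ 𝒜 1) {J J' : Finset (Fin s)} (h : ¬ Disjoint J J') :
    oddMonomial y J * oddMonomial y J' = 0 := by
  rw [oddMonomial_mul_oddMonomial_eq_prod]
  refine List.prod_eq_zero_of_odd_of_not_nodup hsq (List.forall_mem_map.mpr fun i _ => hy i)
    fun hnd => h ?_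
  have hnd' := List.nodup_append.mp (List.Nodup.of_map y hnd)
  exact Finset.disjoint_left.mpr fun i hi hi' =>
    hnd'.2.2 i ((Finset.mem_sort _).mpr hi) i ((Finset.mem_sort _).mpr hi') rfl

theorem oddMonomial_mul_oddMonomial_of_disjoint (hsq : ∀ a ∈ 𝒜 1, a * a = 0)
    (hy : ∀ i, y i ∈ 𝒜 1) {J J' : Finset (Fin s)} (h : Disjoint J J') :
    ∃ u : ℤˣ, oddMonomial y J * oddMonomial y J' = u • oddMonomial y (J ∪ J') := by
  have hperm : (J.sort (· ≤ ·) ++ J'.sort (· ≤ ·)).Perm ((J ∪ J').sort (· ≤ ·)) := by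
    refine List.perm_of_nodup_nodup_toFinset_eq ?_ (Finset.sort_nodup _ _) ?_
    · exact (Finset.sort_nodup _ _).append (Finset.sort_nodup _ _)
        (by simpa [List.disjoint_left] using Finset.disjoint_left.mp h)
    · simp [List.toFinset_append, Finset.sort_toFinset]
  rw [oddMonomial_mul_oddMonomial_eq_prod]
  exact (hperm.map y).prod_eq_units_smul_prod_of_odd hsq
    (List.forall_mem_map.mpr fun i _ => hy i)

variable (R₀ y) in
def oddMonomialSpan (k : ℕ) : Submodule R₀ R :=
  Submodule.span R₀ {x : R | ∃ J : Finset (Fin s), J.card = k ∧ x = oddMonomial y J}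

theorem odd_mul_oddMonomialSpan_le (hsq : ∀ a ∈ 𝒜 1, a * a = 0) (hy : ∀ i, y i ∈ 𝒜 1)
    (hgen : Submodule.span R₀ (Set.range y) = 𝒜 1) (k : ℕ) :
    𝒜 1 * oddMonomialSpan R₀ y k ≤ oddMonomialSpan R₀ y (k + 1) := by
  rw [← hgen, oddMonomialSpan, Submodule.span_mul_span, Submodule.span_le]
  rintro _ ⟨_, ⟨i, rfl⟩, _, ⟨J, rfl, rfl⟩, rfl⟩
  change y i * _ ∈ _
  rw [← oddMonomial_singleton (y := y) i]
  by_cases hi : i ∈ J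
  · rw [oddMonomial_mul_oddMonomial_of_not_disjoint hsq hy
      (Finset.not_disjoint_iff.mpr ⟨i, Finset.mem_singleton_self i, hi⟩)]
    exact zero_mem _
  · obtain ⟨u, hu⟩ := oddMonomial_mul_oddMonomial_of_disjoint hsq hy
      (Finset.disjoint_singleton_left.mpr hi)
    rw [hu, Units.smul_def]
    refine Submodule.smul_of_tower_mem _ _ (Submodule.subset_span ⟨_, ?_, rfl⟩)
    rw [← Finset.insert_eq, Finset.card_insert_of_notMem hi]

theorem List.prod_mem_oddMonomialSpan (hsq : ∀ a ∈ 𝒜 1, a * a = 0) (hy : ∀ i, y i ∈ 𝒜 1)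
    (hgen : Submodule.span R₀ (Set.range y) = 𝒜 1) {L : List R} (hL : ∀ x ∈ L, x ∈ 𝒜 1) :
    L.prod ∈ oddMonomialSpan R₀ y L.length := by
  induction L with
  | nil => exact Submodule.subset_span ⟨∅, rfl, by simp [oddMonomial]⟩
  | cons a L ih =>
    rw [List.prod_cons, List.length_cons]
    exact odd_mul_oddMonomialSpan_le hsq hy hgen _ <| Submodule.mul_mem_mul (hL a (by simp))
      (ih fun x hx => hL x (List.mem_cons_of_mem a hx))

theorem oddMonomialSpan_eq_bot {k : ℕ} (hk : s < k) : oddMonomialSpan R₀ y k = ⊥ := by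
  rw [oddMonomialSpan, Submodule.span_eq_bot]
  rintro _ ⟨J, hJ, rfl⟩
  have := J.card_le_univ
  simp only [Fintype.card_fin] at this
  omega

theorem oddMonomialSpan_self : oddMonomialSpan R₀ y s = R₀ ∙ oddMonomial y Finset.univ := by
  rw [oddMonomialSpan]
  congr 1
  ext x
  have hcard (J : Finset (Fin s)) : J.card = s ↔ J = Finset.univ := by
    simpa using Finset.card_eq_iff_eq_univ J
  simp only [Set.mem_ofPred_eq, Set.mem_singleton_iff, hcard, exists_eq_left]

theorem oddProd_mem_oddMonomialSpan (hsq : ∀ a ∈ 𝒜 1, a * a = 0) (hy : ∀ i, y i ∈ 𝒜 1)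
    (hgen : Submodule.span R₀ (Set.range y) = 𝒜 1) {k : ℕ} {w : Fin k → R}
    (hw : ∀ i, w i ∈ 𝒜 1) : oddProd w ∈ oddMonomialSpan R₀ y k := by
  simpa [oddProd] using
    List.prod_mem_oddMonomialSpan hsq hy hgen (L := List.ofFn w) (by simpa using hw)

theorem oddProd_eq_zero (hsq : ∀ a ∈ 𝒜 1, a * a = 0) (hy : ∀ i, y i ∈ 𝒜 1)
    (hgen : Submodule.span R₀ (Set.range y) = 𝒜 1) {k : ℕ} (hk : s < k) {w : Fin k → R}
    (hw : ∀ i, w i ∈ 𝒜 1) : oddProd w = 0 := by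
  simpa [oddMonomialSpan_eq_bot hk] using oddProd_mem_oddMonomialSpan hsq hy hgen hw

theorem IApow_eq_bot (hsq : ∀ a ∈ 𝒜 1, a * a = 0) (hy : ∀ i, y i ∈ 𝒜 1)
    (hgen : Submodule.span R₀ (Set.range y) = 𝒜 1) {k : ℕ} (hk : s < k) : IApow 𝒜 k = ⊥ := by
  rw [IApow, Submodule.span_eq_bot]
  rintro _ ⟨k', hk', w, hw, rfl⟩
  exact oddProd_eq_zero hsq hy hgen (hk.trans_le hk') hw

theorem IApow_le_oddMonomialSpan_sup (hsq : ∀ a ∈ 𝒜 1, a * a = 0) (hy : ∀ i, y i ∈ 𝒜 1)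
    (hgen : Submodule.span R₀ (Set.range y) = 𝒜 1) (t : ℕ) :
    IApow 𝒜 t ≤ oddMonomialSpan R₀ y t ⊔ IApow 𝒜 (t + 1) := by
  rw [IApow, Submodule.span_le]
  rintro _ ⟨k, hk, w, hw, rfl⟩
  rcases hk.eq_or_lt with rfl | hlt
  · exact Submodule.mem_sup_left (oddProd_mem_oddMonomialSpan hsq hy hgen hw)
  · exact Submodule.mem_sup_right (Submodule.subset_span ⟨k, hlt, w, hw, rfl⟩)

theorem IApow_mul_le (m n : ℕ) : IApow 𝒜 m * IApow 𝒜 n ≤ IApow 𝒜 (m + n) := by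
  rw [IApow, IApow, Submodule.span_mul_span, Submodule.span_le]
  rintro _ ⟨_, ⟨k, hk, w, hw, rfl⟩, _, ⟨k', hk', w', hw', rfl⟩, rfl⟩
  refine Submodule.subset_span ⟨k + k', by omega, Fin.append w w', ?_, ?_⟩
  · exact Fin.addCases (by simpa using hw) (by simpa using hw')
  · simp [oddProd, List.ofFn_fin_append]

theorem List.prod_mem_IApow {L : List R} (hL : ∀ x ∈ L, x ∈ 𝒜 1) :
    L.prod ∈ IApow 𝒜 L.length :=
  Submodule.subset_span ⟨L.length, le_rfl, L.get, fun i => hL _ (L.get_mem i), by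
    rw [oddProd, List.ofFn_get]⟩

theorem mem_IApow_one {a : R} (ha : a ∈ 𝒜 1) : a ∈ IApow 𝒜 1 := by
  simpa using List.prod_mem_IApow (L := [a]) (by simpa using ha)

theorem oddMonomial_mem_IApow (hy : ∀ i, y i ∈ 𝒜 1) (J : Finset (Fin s)) :
    oddMonomial y J ∈ IApow 𝒜 J.card := by
  simpa [oddMonomial] using List.prod_mem_IApow (L := (J.sort (· ≤ ·)).map y)
    (List.forall_mem_map.mpr fun i _ => hy i)

theorem mem_torsionOf_of_sum_smul_oddMonomial_mem_IApow (hsq : ∀ a ∈ 𝒜 1, a * a = 0)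
    (hy : ∀ i, y i ∈ 𝒜 1) (hgen : Submodule.span R₀ (Set.range y) = 𝒜 1) {t : ℕ}
    {a : Finset (Fin s) → R₀}
    (hrel : ∑ J ∈ Finset.univ.filter (fun J : Finset (Fin s) => J.card = t),
      a J • oddMonomial y J ∈ IApow 𝒜 (t + 1))
    {J₀ : Finset (Fin s)} (hJ₀ : J₀.card = t) :
    a J₀ ∈ Ideal.torsionOf R₀ R (oddMonomial y Finset.univ) := by
  have hzero : (∑ J ∈ Finset.univ.filter (fun J : Finset (Fin s) => J.card = t),
      a J • oddMonomial y J) * oddMonomial y J₀ᶜ = 0 := by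
    have hcard : s < t + 1 + J₀ᶜ.card := by
      rw [Finset.card_compl, Fintype.card_fin, ← hJ₀]
      have := J₀.card_le_univ
      simp only [Fintype.card_fin] at this
      omega
    have := IApow_mul_le _ _ (Submodule.mul_mem_mul hrel (oddMonomial_mem_IApow hy J₀ᶜ))
    rwa [IApow_eq_bot hsq hy hgen hcard, Submodule.mem_bot] at this
  rw [Finset.sum_mul, Finset.sum_eq_single J₀] at hzero
  · obtain ⟨u, hu⟩ := oddMonomial_mul_oddMonomial_of_disjoint hsq hy
      (disjoint_compl_right (a := J₀))
    rw [smul_mul_assoc, hu, Finset.union_compl, smul_comm, smul_eq_zero_iff_eq] at hzero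
    exact (Ideal.mem_torsionOf_iff _ _).mpr hzero
  · intro J hJ hne
    have hnot : ¬ Disjoint J J₀ᶜ := fun hdisj =>
      hne (Finset.eq_of_subset_of_card_le (disjoint_compl_right_iff.mp hdisj)
        (by rw [hJ₀, (Finset.mem_filter.mp hJ).2]))
    rw [smul_mul_assoc, oddMonomial_mul_oddMonomial_of_not_disjoint hsq hy hnot, smul_zero]
  · exact fun h => absurd (Finset.mem_filter.mpr ⟨Finset.mem_univ J₀, hJ₀⟩) h

theorem oddSquares_le_torsionOf_oddMonomial_univ (hsq : ∀ a ∈ 𝒜 1, a * a = 0)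
    (hy : ∀ i, y i ∈ 𝒜 1) (hgen : Submodule.span R₀ (Set.range y) = 𝒜 1) :
    oddSquares 𝒜 ≤ Ideal.torsionOf R₀ R (oddMonomial y Finset.univ) := by
  suffices h : Ideal.span {x : R | ∃ a ∈ 𝒜 1, ∃ b ∈ 𝒜 1, x = a * b} ≤
      Ideal.torsionOf R R (oddMonomial y Finset.univ) by
    intro c hc
    rw [Ideal.mem_torsionOf_iff, Algebra.smul_def]
    exact (Ideal.mem_torsionOf_iff _ _).mp (h hc)
  rw [Ideal.span_le]
  rintro _ ⟨a, ha, b, hb, rfl⟩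
  have hab : a * b * oddMonomial y Finset.univ ∈ IApow 𝒜 (1 + 1 + s) :=
    IApow_mul_le _ _ <| Submodule.mul_mem_mul
      (IApow_mul_le _ _ (Submodule.mul_mem_mul (mem_IApow_one ha) (mem_IApow_one hb)))
      (by simpa using oddMonomial_mem_IApow hy Finset.univ)
  rw [IApow_eq_bot hsq hy hgen (by omega), Submodule.mem_bot] at hab
  exact (Ideal.mem_torsionOf_iff _ _).mpr hab

theorem ringKrullDim_quotient_torsionOf_oddMonomial_univ [Nontrivial R₀]
    (hsq : ∀ a ∈ 𝒜 1, a * a = 0) (hy : ∀ i, y i ∈ 𝒜 1)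
    (hgen : Submodule.span R₀ (Set.range y) = 𝒜 1) (hs : 0 < s)
    (hreg_odd : sSup {u : ℕ | ∃ w : Fin u → R, (∀ i, w i ∈ 𝒜 1) ∧
      ringKrullDim (R₀ ⧸ Ideal.torsionOf R₀ R (oddProd w)) = ringKrullDim R₀} = s) :
    ringKrullDim (R₀ ⧸ Ideal.torsionOf R₀ R (oddMonomial y Finset.univ)) = ringKrullDim R₀ := by
  set S := {u : ℕ | ∃ w : Fin u → R, (∀ i, w i ∈ 𝒜 1) ∧
    ringKrullDim (R₀ ⧸ Ideal.torsionOf R₀ R (oddProd w)) = ringKrullDim R₀}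
  have hbdd : ∀ u ∈ S, u ≤ s := by
    rintro u ⟨w, hw, hdim⟩
    by_contra! hu
    rw [oddProd_eq_zero hsq hy hgen hu hw, Ideal.torsionOf_zero,
      ringKrullDim_eq_bot_of_subsingleton] at hdim
    exact absurd (hdim ▸ ringKrullDim_nonneg_of_nontrivial) (by simp)
  have hne : S.Nonempty := by
    by_contra h
    rw [Set.not_nonempty_iff_eq_empty.mp h, csSup_empty, bot_eq_zero] at hreg_odd
    omega
  obtain ⟨w, hw, hdim⟩ : s ∈ S := hreg_odd ▸ Nat.sSup_mem hne ⟨s, hbdd⟩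
  have hmem := oddProd_mem_oddMonomialSpan hsq hy hgen hw
  rw [oddMonomialSpan_self] at hmem
  obtain ⟨c, hc⟩ := Submodule.mem_span_singleton.mp hmem
  have hle : Ideal.torsionOf R₀ R (oddMonomial y Finset.univ) ≤
      Ideal.torsionOf R₀ R (oddProd w) := fun r hr => by
    rw [Ideal.mem_torsionOf_iff] at hr ⊢
    rw [← hc, smul_comm, hr, smul_zero]
  exact le_antisymm (ringKrullDim_quotient_le _) (hdim ▸
    ringKrullDim_le_of_surjective _ (Ideal.Quotient.factor_surjective hle))

theorem torsionOf_oddMonomial_univ_eq_oddSquares [FiniteRingKrullDim R₀]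
    [IsDomain (R₀ ⧸ oddSquares 𝒜)]
    (hsq : ∀ a ∈ 𝒜 1, a * a = 0) (hy : ∀ i, y i ∈ 𝒜 1)
    (hgen : Submodule.span R₀ (Set.range y) = 𝒜 1) (hs : 0 < s)
    (hreg_odd : sSup {u : ℕ | ∃ w : Fin u → R, (∀ i, w i ∈ 𝒜 1) ∧
      ringKrullDim (R₀ ⧸ Ideal.torsionOf R₀ R (oddProd w)) = ringKrullDim R₀} = s) :
    Ideal.torsionOf R₀ R (oddMonomial y Finset.univ) = oddSquares 𝒜 :=
  have := Nontrivial.of_finiteRingKrullDim (R := R₀)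
  Ideal.eq_of_le_of_ringKrullDim_quotient_eq
    (oddSquares_le_torsionOf_oddMonomial_univ hsq hy hgen)
    (ringKrullDim_quotient_torsionOf_oddMonomial_univ hsq hy hgen hs hreg_odd)

end OddElements

theorem regular_local_gr_free_basis_general
    {R₀ R : Type*} [CommRing R₀] [Ring R] [Algebra R₀ R]
    (𝒜 : ZMod 2 → Submodule R₀ R)
    (hsq : ∀ a ∈ 𝒜 1, a * a = 0)
    [IsLocalRing R₀] [IsNoetherianRing R₀]
    (hdomain : IsDomain (R₀ ⧸ oddSquares 𝒜))
    (s : ℕ) (y : Fin s → R) (hy : ∀ i, y i ∈ 𝒜 1)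
    (hgen : Submodule.span R₀ (Set.range y) = 𝒜 1)
    (hreg_odd : sSup {u : ℕ | ∃ w : Fin u → R, (∀ i, w i ∈ 𝒜 1) ∧
      ringKrullDim (R₀ ⧸ Ideal.torsionOf R₀ R (oddProd w)) = ringKrullDim R₀}
        = s) :
    ∀ t : ℕ, 0 < t → t ≤ s →
      (IApow 𝒜 t ≤
        Submodule.span R₀
          {x : R | ∃ J : Finset (Fin s), J.card = t ∧ x = oddMonomial y J} ⊔
        IApow 𝒜 (t + 1)) ∧
      (∀ a : Finset (Fin s) → R₀,
        (∑ J ∈ Finset.univ.filter (fun J : Finset (Fin s) => J.card = t),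
            a J • oddMonomial y J) ∈ IApow 𝒜 (t + 1) →
        ∀ J : Finset (Fin s), J.card = t → a J ∈ oddSquares 𝒜) := by
  intro t ht hts
  refine ⟨IApow_le_oddMonomialSpan_sup hsq hy hgen t, fun a hrel J hJ => ?_⟩
  have := hdomain
  rw [← torsionOf_oddMonomial_univ_eq_oddSquares hsq hy hgen (ht.trans_le hts) hreg_odd]
  exact mem_torsionOf_of_sum_smul_oddMonomial_mem_IApow hsq hy hgen hrel hJ

/-- Let `(A, m)` be a regular local Noetherian
super-commutative super-ring (regularity: `Kdim R₀` equals the minimal number of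
generators of `m₀` modulo `A₁²`, and the odd Krull dimension equals `s`) such
that `Ā = A₀/A₁²` is an integral domain, and let `y₁,…,yₛ` be a minimal
generating set of the `A₀`-module `A₁`.  Then for each `0 < t ≤ s` the products
`y^J`, `|J| = t`, form a free `Ā`-basis of `I_A^t/I_A^{t+1}`: they span it, and
any `R₀`-linear relation modulo `I_A^{t+1}` has all coefficients in `A₁²`
(i.e. the canonical map `λ_A : Λ_Ā(I_A/I_A²) → gr_{I_A}(A)` is an
isomorphism). -/
theorem regular_local_gr_free_basis
    {R₀ R : Type*} [CommRing R₀] [Ring R] [Algebra R₀ R]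
    (𝒜 : ZMod 2 → Submodule R₀ R) [GradedAlgebra 𝒜]
    (h0 : 𝒜 0 = 1) (hinj : Function.Injective (algebraMap R₀ R))
    (hsq : ∀ a ∈ 𝒜 1, a * a = 0)
    [IsLocalRing R₀] [IsNoetherianRing R₀] [Module.Finite R₀ (𝒜 1)]
    (hdomain : IsDomain (R₀ ⧸ oddSquares 𝒜))
    (s : ℕ) (y : Fin s → R) (hy : ∀ i, y i ∈ 𝒜 1)
    (hgen : Submodule.span R₀ (Set.range y) = 𝒜 1)
    (hmin : ∀ (t' : ℕ) (w : Fin t' → R), (∀ i, w i ∈ 𝒜 1) →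
      Submodule.span R₀ (Set.range w) = 𝒜 1 → s ≤ t')
    (hreg_even : ringKrullDim R₀ =
      (sInf {n : ℕ | ∃ x : Fin n → R₀,
        Ideal.span (Set.range x) ⊔ oddSquares 𝒜 =
          IsLocalRing.maximalIdeal R₀} : ℕ))
    (hreg_odd : sSup {u : ℕ | ∃ w : Fin u → R, (∀ i, w i ∈ 𝒜 1) ∧
      ringKrullDim (R₀ ⧸ Ideal.torsionOf R₀ R (oddProd w)) = ringKrullDim R₀}
        = s) :
    ∀ t : ℕ, 0 < t → t ≤ s →
      (IApow 𝒜 t ≤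
        Submodule.span R₀
          {x : R | ∃ J : Finset (Fin s), J.card = t ∧ x = oddMonomial y J} ⊔
        IApow 𝒜 (t + 1)) ∧
      (∀ a : Finset (Fin s) → R₀,
        (∑ J ∈ Finset.univ.filter (fun J : Finset (Fin s) => J.card = t),
            a J • oddMonomial y J) ∈ IApow 𝒜 (t + 1) →
        ∀ J : Finset (Fin s), J.card = t → a J ∈ oddSquares 𝒜) :=
  regular_local_gr_free_basis_general 𝒜 hsq hdomain s y hy hgen hreg_odd
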